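/- arXiv:1502.06495 — 4 statements merged into one kernel-verified Lean document; each statement's English description precedes it below -/
import Mathlib

section
/- Let P be an fs monoid, α : ℕ → P a vertical homomorphism, d a positive integer, and Q = P ⊕_ℕ (1/d)ℕ. If an element x = (p, m/d) of Q^gp (with p ∈ P^gp, m ∈ ℤ) satisfies N·x ∈ Q for some N > 0, then d·p + m·α(1) ∈ P; conversely, if d·p + m·α(1) ∈ P then x ∈ Q^sat. -/
/-- `F` is a face of the monoid `P`. -/
def IsMonoidFace {G : Type*} [AddCommGroup G] (P F : AddSubmonoid G) : Prop :=
  F ≤ P ∧ ∀ a ∈ P, ∀ b ∈ P, a + b ∈ F → a ∈ F ∧ b ∈ F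

/-- With `P` an fs monoid with group envelope `G`, `α : ℕ → P` vertical with
`e = α(1)`, `d > 0`, and `Q = P ⊕_ℕ (1/d)ℕ` with group envelope `H = (G × ℤ)/⟨(e, -d)⟩`:
if the element `x = (p, m/d)` of `Q^gp` (i.e. `x = π (p, m)`) satisfies `N • x ∈ Q` for some
`N > 0`, then `d•p + m•e ∈ P`; conversely, if `d•p + m•e ∈ P` then `x ∈ Q^sat`. -/
theorem pushout_saturation_membership
    {G : Type*} [AddCommGroup G] (P : AddSubmonoid G)
    (hgen : AddSubgroup.closure (P : Set G) = ⊤)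
    (hfg : ∃ S : Finset G, AddSubmonoid.closure (S : Set G) = P)
    (hsat : ∀ g : G, ∀ n : ℕ, 0 < n → n • g ∈ P → g ∈ P)
    (e : G) (he : e ∈ P)
    (hvert : ∀ F : AddSubmonoid G, IsMonoidFace P F → e ∈ F → F = P)
    (d : ℕ) (hd : 0 < d)
    {H : Type*} [AddCommGroup H] (π : (G × ℤ) →+ H)
    (hπsurj : Function.Surjective π)
    (hπker : π.ker = AddSubgroup.zmultiples ((e, -(d : ℤ)) : G × ℤ))
    (Q : AddSubmonoid H)
    (hQ : (Q : Set H) = π '' {x : G × ℤ | x.1 ∈ P ∧ 0 ≤ x.2})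
    (p : G) (m : ℤ) :
    ((∃ N : ℕ, 0 < N ∧ N • π (p, m) ∈ Q) → (d : ℤ) • p + m • e ∈ P)
    ∧ ((d : ℤ) • p + m • e ∈ P → ∃ n : ℕ, 0 < n ∧ n • π (p, m) ∈ Q) := by
  constructor
  · rintro ⟨N, hN, hNQ⟩
    have hNQ' : π (N • (p, m)) ∈ (Q : Set H) := by
      rw [map_nsmul]; exact hNQ
    rw [hQ] at hNQ'
    obtain ⟨x, ⟨hx1, hx2⟩, hxeq⟩ := hNQ'
    have hker : N • (p, m) - x ∈ π.ker := by
      simp [AddMonoidHom.mem_ker, map_sub, hxeq]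
    rw [hπker] at hker
    obtain ⟨c, hc⟩ := AddSubgroup.mem_zmultiples_iff.mp hker
    have h1 : c • e = (N : ℤ) • p - x.1 := by
      have := congrArg Prod.fst hc
      simpa [natCast_zsmul] using this
    have h2 : c * (-(d : ℤ)) = (N : ℤ) * m - x.2 := by
      have := congrArg Prod.snd hc
      simpa [smul_eq_mul, nsmul_eq_mul] using this
    have h2' : (c * (-(d : ℤ))) • e = ((N : ℤ) * m - x.2) • e := by rw [h2]
    have key : (N : ℤ) • ((d : ℤ) • p + m • e) = (d : ℤ) • x.1 + x.2 • e := by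
      linear_combination (norm := module) (-(d : ℤ)) • h1 - h2'
    refine hsat _ N hN ?_
    rw [← natCast_zsmul, key]
    have hx2' : x.2 • e = x.2.toNat • e := by
      rw [← natCast_zsmul, Int.toNat_of_nonneg hx2]
    have hd1 : (d : ℤ) • x.1 = d • x.1 := natCast_zsmul _ _
    rw [hx2', hd1]
    exact add_mem (AddSubmonoid.nsmul_mem _ hx1 _) (AddSubmonoid.nsmul_mem _ he _)
  · intro hP
    refine ⟨d, hd, ?_⟩
    have hrw : (d • π (p, m) : H) = π (d • (p, m)) := (map_nsmul π _ _).symm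
    rw [hrw]
    have hmem : π (d • (p, m)) ∈ (Q : Set H) := by
      rw [hQ]
      refine ⟨((d : ℤ) • p + m • e, 0), ⟨hP, le_refl 0⟩, ?_⟩
      have hdiff : (d • (p, m) : G × ℤ) - ((d : ℤ) • p + m • e, 0)
          = (-m) • (e, -(d : ℤ)) := by
        ext
        · simp [natCast_zsmul]
        · simp [nsmul_eq_mul, smul_eq_mul]; ring
      have hker0 : π ((e, -(d : ℤ))) = 0 := by
        have hmem0 : ((e, -(d : ℤ)) : G × ℤ) ∈ π.ker := by
          rw [hπker]; exact AddSubgroup.mem_zmultiples _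
        exact hmem0
      have heq := congrArg π hdiff
      rw [map_sub, map_zsmul, hker0, smul_zero, sub_eq_zero] at heq
      exact heq.symm
    exact hmem
end

section
/- Let P be a toric monoid (fs with torsion-free group envelope), with P^gp ≅ ℤ^r, and let v ∈ ℤ^r be the image of 1 under a homomorphism ℕ → P composed with P → P^gp ≅ ℤ^r. Write v = λ·v₀ with λ ∈ ℤ and v₀ a primitive vector. Then for any positive integer d, the torsion subgroup of Q^gp = (ℤ^r ⊕ ℤ)/⟨(v, -d)⟩ is cyclic of order gcd(d, λ); in particular its order divides gcd(d, λ). -/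
/-!
Put `g = gcd(d, λ)`, so that `(v, -d) = g • u` with `u = ((λ / g) • v₀, -(d / g))`. Because `v₀`
is primitive and `λ / g`, `d / g` are coprime, the subgroup `⟨u⟩` is saturated in `ℤ^r × ℤ`:
whenever `n • x ∈ ⟨u⟩` with `n ≠ 0`, already `x ∈ ⟨u⟩`. Hence the torsion of the quotient by
`⟨g • u⟩` is exactly `⟨u⟩ / ⟨g • u⟩ ≅ ℤ / g`, as `u` has infinite order.
-/

open AddSubgroup

section Primitive

variable {ι : Type*} [Fintype ι] {v₀ : ι → ℤ}

theorem univ_gcd_eq_one_of_primitive (hprim : ∀ k : ℤ, 0 < k → (∀ i, k ∣ v₀ i) → k = 1) :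
    Finset.univ.gcd v₀ = 1 := by
  have hdvd : ∀ i, Finset.univ.gcd v₀ ∣ v₀ i := fun i => Finset.gcd_dvd (Finset.mem_univ i)
  have hnonneg : 0 ≤ Finset.univ.gcd v₀ := Int.nonneg_of_normalize_eq_self Finset.normalize_gcd
  rcases hnonneg.lt_or_eq with hpos | hzero
  · exact hprim _ hpos hdvd
  · have hv₀ : ∀ i, v₀ i = 0 := fun i => Finset.gcd_eq_zero_iff.mp hzero.symm i (Finset.mem_univ i)
    have := hprim 2 two_pos (fun i => by simp [hv₀ i])
    omega

theorem dvd_of_forall_dvd_mul_of_primitive (hprim : ∀ k : ℤ, 0 < k → (∀ i, k ∣ v₀ i) → k = 1)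
    {k a : ℤ} (h : ∀ i, k ∣ a * v₀ i) : k ∣ a := by
  have := Finset.dvd_gcd (s := Finset.univ) fun i _ => h i
  rwa [Finset.gcd_mul_left, univ_gcd_eq_one_of_primitive hprim, mul_one,
    dvd_normalize_iff] at this

theorem nsmulSaturated_zmultiples_of_primitive
    (hprim : ∀ k : ℤ, 0 < k → (∀ i, k ∣ v₀ i) → k = 1) {a b : ℤ} (hab : IsCoprime a b) :
    (zmultiples ((a • v₀, b) : (ι → ℤ) × ℤ)).NSMulSaturated := by
  rw [saturated_iff_zsmul]
  rintro n ⟨p, q⟩ ⟨m, hm⟩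
  by_cases hn : n = 0
  · exact .inl hn
  refine .inr ?_
  have hfst : ∀ i, m * a * v₀ i = n * p i := fun i => by
    simpa [mul_assoc] using congrFun (congrArg Prod.fst hm) i
  have hsnd : m * b = n * q := by simpa using congrArg Prod.snd hm
  have hna : n ∣ m * a := dvd_of_forall_dvd_mul_of_primitive hprim fun i => ⟨p i, hfst i⟩
  have hnb : n ∣ m * b := ⟨q, hsnd⟩
  obtain ⟨j, rfl⟩ : n ∣ m := by
    obtain ⟨x, y, hxy⟩ := hab
    have : m = x * (m * a) + y * (m * b) := by linear_combination -m * hxy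
    rw [this]
    exact dvd_add (hna.mul_left x) (hnb.mul_left y)
  refine ⟨j, zsmul_right_injective hn ?_⟩
  simpa only [smul_smul] using hm

end Primitive

section Quotient

variable {G H : Type*} [AddCommGroup G] [AddCommGroup H] {π : G →+ H} {u : G} {g : ℕ}

theorem range_zmultiplesHom_eq_torsion (hπ : Function.Surjective π)
    (hsat : (zmultiples u).NSMulSaturated) (hg : g ≠ 0) (hker : π.ker = zmultiples (g • u)) :
    (zmultiplesHom H (π u)).range = AddCommGroup.torsion H := by
  have hgu : π (g • u) = 0 := by rw [← AddMonoidHom.mem_ker, hker]; exact mem_zmultiples _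
  ext x
  rw [AddMonoidHom.mem_range, AddCommGroup.mem_torsion]
  constructor
  · rintro ⟨j, rfl⟩
    refine isOfFinAddOrder_iff_nsmul_eq_zero.mpr ⟨g, Nat.pos_of_ne_zero hg, ?_⟩
    rw [zmultiplesHom_apply, smul_comm, ← map_nsmul, hgu, smul_zero]
  · intro hx
    obtain ⟨y, rfl⟩ := hπ x
    obtain ⟨n, hn, hny⟩ := isOfFinAddOrder_iff_nsmul_eq_zero.mp hx
    have hmem : n • y ∈ zmultiples u := by
      rw [← map_nsmul, ← AddMonoidHom.mem_ker, hker] at hny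
      exact zmultiples_le_of_mem (nsmul_mem (mem_zmultiples u) g) hny
    obtain ⟨j, rfl⟩ := (hsat hmem).resolve_left hn.ne'
    exact ⟨j, by simp⟩

theorem ker_zmultiplesHom_eq_zmultiples (hu : ¬IsOfFinAddOrder u)
    (hker : π.ker = zmultiples (g • u)) :
    (zmultiplesHom H (π u)).ker = zmultiples (g : ℤ) := by
  ext n
  rw [AddMonoidHom.mem_ker, zmultiplesHom_apply, ← map_zsmul, ← AddMonoidHom.mem_ker, hker,
    Int.mem_zmultiples_iff, mem_zmultiples_iff]
  simp only [smul_smul, ← natCast_zsmul, (injective_zsmul_iff_not_isOfFinAddOrder.mpr hu).eq_iff]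
  exact ⟨fun ⟨m, hm⟩ => ⟨m, by rw [← hm, mul_comm]⟩, fun ⟨m, hm⟩ => ⟨m, by rw [hm, mul_comm]⟩⟩

theorem nonempty_torsion_addEquiv_zmod (hπ : Function.Surjective π)
    (hsat : (zmultiples u).NSMulSaturated) (hu : ¬IsOfFinAddOrder u) (hg : g ≠ 0)
    (hker : π.ker = zmultiples (g • u)) :
    Nonempty (AddCommGroup.torsion H ≃+ ZMod g) :=
  ⟨(AddEquiv.addSubgroupCongr (range_zmultiplesHom_eq_torsion hπ hsat hg hker)).symm
    |>.trans (QuotientAddGroup.quotientKerEquivRange _).symm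
    |>.trans (QuotientAddGroup.quotientAddEquivOfEq (ker_zmultiplesHom_eq_zmultiples hu hker))
    |>.trans (Int.quotientZMultiplesNatEquivZMod g)⟩

end Quotient

/-- Let `v ∈ ℤ^r` and write `v = λ • v₀` with `v₀` a primitive vector
(the gcd of its coordinates is `1`). Then for any `d > 0`, the torsion subgroup of
`Q^gp = (ℤ^r ⊕ ℤ)/⟨(v, -d)⟩` is cyclic of order `gcd(d, λ)`; in particular its order
divides `gcd(d, λ)`. -/
theorem torsion_of_pushout_envelope
    (r : ℕ) (v v₀ : Fin r → ℤ) (lam : ℤ)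
    (hv : v = lam • v₀)
    -- v₀ is primitive: the gcd of its coordinates is 1
    (hprim : ∀ k : ℤ, 0 < k → (∀ i, k ∣ v₀ i) → k = 1)
    (d : ℕ) (hd : 0 < d)
    {H : Type*} [AddCommGroup H] (π : ((Fin r → ℤ) × ℤ) →+ H)
    (hπsurj : Function.Surjective π)
    (hπker : π.ker = AddSubgroup.zmultiples ((v, -(d : ℤ)) : (Fin r → ℤ) × ℤ)) :
    Nonempty ((AddCommGroup.torsion H) ≃+ ZMod (Nat.gcd d lam.natAbs)) := by
  set g := Nat.gcd d lam.natAbs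
  have hgcd : (g : ℤ) = GCDMonoid.gcd lam (d : ℤ) := by
    rw [← Int.coe_gcd, Int.gcd, Int.natAbs_natCast, Nat.gcd_comm]
  have hd0 : (d : ℤ) ≠ 0 := by exact_mod_cast hd.ne'
  have hcop : IsCoprime (lam / g) (-((d : ℤ) / g)) :=
    (hgcd ▸ isCoprime_div_gcd_div_gcd hd0).neg_right
  have hlam : lam = g * (lam / g) := (Int.mul_ediv_cancel' (hgcd ▸ gcd_dvd_left _ _)).symm
  have hdg : (d : ℤ) = g * ((d : ℤ) / g) := (Int.mul_ediv_cancel' (hgcd ▸ gcd_dvd_right _ _)).symm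
  have hu : ¬IsOfFinAddOrder (((lam / g) • v₀, -((d : ℤ) / g)) : (Fin r → ℤ) × ℤ) :=
    not_isOfFinAddOrder_of_isAddTorsionFree fun h => hd0 <| by
      rw [hdg, neg_eq_zero.mp (congrArg Prod.snd h), mul_zero]
  refine nonempty_torsion_addEquiv_zmod hπsurj (nsmulSaturated_zmultiples_of_primitive hprim hcop)
    hu (Nat.gcd_pos_of_pos_left _ hd).ne' ?_
  rw [hπker, hv]
  congr 1
  ext i
  · simp [← mul_assoc, ← hlam]
  · simp [← hdg]
end

section
/- Let k be a field, P an fs monoid, 𝔭 a prime ideal of P. Then the localization of k[P]/(𝔭) at the multiplicative set generated by the image of P∖𝔭 is isomorphic as a k-algebra to the group algebra k[(P∖𝔭)^gp]. -/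
/-!
Sending `X^p` to `X^p` for `p ∈ F` and to `0` for `p ∈ 𝔭` is a `k`-algebra map
`k[P] → k[F^gp]`, multiplicative because `𝔭 = P ∖ F` is an ideal of `P`. Its kernel is exactly
the monomial ideal `(𝔭)`, so `k[P]/(𝔭)` embeds into `k[F^gp]`. There the monomials of `F` are
units, and since every element of `F^gp` is a difference `a - b` of elements of `F`, every element
of `k[F^gp]` is a fraction with a monomial of `F` as denominator; so `k[F^gp]` is the localization.
-/

open AddMonoidAlgebra

theorem AddSubmonoid.exists_sub_eq_of_mem_addSubgroupClosure {G : Type*} [AddCommGroup G]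
    {F : AddSubmonoid G} {g : G} (hg : g ∈ AddSubgroup.closure (F : Set G)) :
    ∃ a ∈ F, ∃ b ∈ F, a - b = g := by
  induction hg using AddSubgroup.closure_induction with
  | mem x hx => exact ⟨x, hx, 0, F.zero_mem, sub_zero x⟩
  | zero => exact ⟨0, F.zero_mem, 0, F.zero_mem, sub_self 0⟩
  | add x y _ _ hx hy =>
    obtain ⟨a, ha, b, hb, rfl⟩ := hx
    obtain ⟨c, hc, d, hd, rfl⟩ := hy
    exact ⟨a + c, F.add_mem ha hc, b + d, F.add_mem hb hd, by abel⟩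
  | neg x _ hx =>
    obtain ⟨a, ha, b, hb, rfl⟩ := hx
    exact ⟨b, hb, a, ha, (neg_sub a b).symm⟩

noncomputable def Localization.algEquivOfInjective {k R A : Type*} [CommSemiring k]
    [CommSemiring R] [CommSemiring A] [Algebra k R] [Algebra k A] {S : Submonoid R}
    (f : R →ₐ[k] A) (hf : Function.Injective f) (hunit : ∀ s : S, IsUnit (f s))
    (hsurj : ∀ z : A, ∃ x : R × S, z * f x.2 = f x.1) : Localization S ≃ₐ[k] A :=
  AlgEquiv.ofBijective (IsLocalization.liftAlgHom hunit)
    ⟨(IsLocalization.lift_injective_iff hunit).mpr fun x y =>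
        ⟨fun h => by simpa using congrArg (IsLocalization.lift hunit) h,
          fun h => by rw [hf h]⟩,
      (IsLocalization.lift_surjective_iff hunit).mpr hsurj⟩

section FaceGroupAlgebra

variable (k : Type*) [CommSemiring k] {G : Type*} [AddCommGroup G] {P : AddSubmonoid G}
  (F : AddSubmonoid G)

open Classical in
noncomputable def faceMonomial (p : P) : AddMonoidAlgebra k (AddSubgroup.closure (F : Set G)) :=
  if h : (p : G) ∈ F then single ⟨p, AddSubgroup.subset_closure h⟩ 1 else 0

variable {k F}

theorem faceMonomial_of_mem {p : P} (hp : (p : G) ∈ F) :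
    faceMonomial k F p = single ⟨p, AddSubgroup.subset_closure hp⟩ 1 :=
  dif_pos hp

theorem faceMonomial_of_notMem {p : P} (hp : (p : G) ∉ F) : faceMonomial k F p = 0 :=
  dif_neg hp

variable (k F)

theorem faceMonomial_zero : faceMonomial k F (0 : P) = 1 :=
  faceMonomial_of_mem F.zero_mem

theorem faceMonomial_add (hface : ∀ a ∈ P, ∀ b ∈ P, a + b ∈ F → a ∈ F ∧ b ∈ F) (p q : P) :
    faceMonomial k F (p + q) = faceMonomial k F p * faceMonomial k F q := by
  by_cases hpq : ((p + q : P) : G) ∈ F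
  · obtain ⟨hp, hq⟩ := hface p p.2 q q.2 hpq
    rw [faceMonomial_of_mem hpq, faceMonomial_of_mem hp, faceMonomial_of_mem hq,
      single_mul_single, one_mul]
    rfl
  · rw [faceMonomial_of_notMem hpq]
    by_cases hp : (p : G) ∈ F
    · rw [faceMonomial_of_notMem fun hq => hpq (F.add_mem hp hq), mul_zero]
    · rw [faceMonomial_of_notMem hp, zero_mul]

variable (hface : ∀ a ∈ P, ∀ b ∈ P, a + b ∈ F → a ∈ F ∧ b ∈ F)

noncomputable def toFaceGroupAlgebra :
    AddMonoidAlgebra k P →ₐ[k] AddMonoidAlgebra k (AddSubgroup.closure (F : Set G)) :=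
  lift k _ P
    { toFun := fun p => faceMonomial k F p.toAdd
      map_one' := faceMonomial_zero k F
      map_mul' := fun p q => faceMonomial_add k F hface p.toAdd q.toAdd }

variable {k F}

theorem toFaceGroupAlgebra_single (p : P) (c : k) :
    toFaceGroupAlgebra k F hface (single p c) = c • faceMonomial k F p :=
  lift_single _ _ _

theorem coeff_toFaceGroupAlgebra (f : AddMonoidAlgebra k P) {p : P} (hp : (p : G) ∈ F) :
    (toFaceGroupAlgebra k F hface f).coeff ⟨p, AddSubgroup.subset_closure hp⟩ = f.coeff p := by
  classical
  induction f using AddMonoidAlgebra.induction_linear with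
  | zero => simp
  | add x y hx hy => simp [hx, hy]
  | single q c =>
    rw [toFaceGroupAlgebra_single]
    by_cases hq : (q : G) ∈ F
    · rw [faceMonomial_of_mem hq, smul_single, smul_eq_mul, mul_one, coeff_single, coeff_single,
        Finsupp.single_apply, Finsupp.single_apply]
      simp only [Subtype.mk.injEq, ← Subtype.ext_iff]
    · have hqp : q ≠ p := by rintro rfl; exact hq hp
      simp [faceMonomial_of_notMem hq, coeff_single, hqp]

theorem toFaceGroupAlgebra_eq_zero_iff (f : AddMonoidAlgebra k P) :
    toFaceGroupAlgebra k F hface f = 0 ↔ ∀ p ∈ f.coeff.support, (p : G) ∉ F := by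
  constructor
  · intro hf p hp hpF
    have := coeff_toFaceGroupAlgebra hface f hpF
    rw [hf, coeff_zero, Finsupp.coe_zero, Pi.zero_apply] at this
    exact Finsupp.mem_support_iff.mp hp this.symm
  · intro hf
    rw [← f.sum_coeff_single, map_finsuppSum]
    refine Finset.sum_eq_zero fun p hp => ?_
    dsimp only
    rw [toFaceGroupAlgebra_single, faceMonomial_of_notMem (hf p hp), smul_zero]

theorem ker_toFaceGroupAlgebra :
    RingHom.ker (toFaceGroupAlgebra k F hface) = Ideal.span (of' k P '' {p | (p : G) ∉ F}) := by
  ext f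
  rw [RingHom.mem_ker, toFaceGroupAlgebra_eq_zero_iff, mem_ideal_span_of'_image]
  refine forall₂_congr fun m _ => ⟨fun hm => ⟨m, hm, 0, (zero_add m).symm⟩, ?_⟩
  rintro ⟨m', hm', d, rfl⟩ hmF
  exact hm' (hface d d.2 m' m'.2 hmF).2

theorem isUnit_toFaceGroupAlgebra_single {p : P} (hp : (p : G) ∈ F) :
    IsUnit (toFaceGroupAlgebra k F hface (single p 1)) := by
  rw [toFaceGroupAlgebra_single, faceMonomial_of_mem hp, one_smul]
  exact (Group.isUnit (Multiplicative.ofAdd _)).map (of k _)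

theorem exists_mul_toFaceGroupAlgebra_single_eq (hFP : F ≤ P)
    (z : AddMonoidAlgebra k (AddSubgroup.closure (F : Set G))) :
    ∃ (x : AddMonoidAlgebra k P) (s : P), (s : G) ∈ F ∧
      z * toFaceGroupAlgebra k F hface (single s 1) = toFaceGroupAlgebra k F hface x := by
  induction z using AddMonoidAlgebra.induction_linear with
  | zero => exact ⟨0, 0, F.zero_mem, by simp⟩
  | add z₁ z₂ h₁ h₂ =>
    obtain ⟨x₁, s₁, hs₁, h₁⟩ := h₁
    obtain ⟨x₂, s₂, hs₂, h₂⟩ := h₂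
    refine ⟨x₁ * single s₂ 1 + x₂ * single s₁ 1, s₁ + s₂, F.add_mem hs₁ hs₂, ?_⟩
    have hs : single (s₁ + s₂) (1 : k) = single s₁ 1 * single s₂ 1 := by
      rw [single_mul_single, mul_one]
    rw [hs, map_add, map_mul, map_mul, map_mul, ← h₁, ← h₂]
    ring
  | single g c =>
    obtain ⟨a, ha, b, hb, hab⟩ := AddSubmonoid.exists_sub_eq_of_mem_addSubgroupClosure g.2
    refine ⟨single ⟨a, hFP ha⟩ c, ⟨b, hFP hb⟩, hb, ?_⟩
    rw [toFaceGroupAlgebra_single, toFaceGroupAlgebra_single, faceMonomial_of_mem hb,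
      faceMonomial_of_mem ha, one_smul, smul_single, smul_eq_mul, mul_one, single_mul_single,
      mul_one]
    congr 1
    ext
    simp [← hab]

end FaceGroupAlgebra

theorem localization_of_quotient_is_group_algebra_general
    {k : Type*} [Field k]
    {G : Type*} [AddCommGroup G] (P F : AddSubmonoid G)
    -- F = P∖𝔭 is a face of P
    (hFP : F ≤ P)
    (hface : ∀ a ∈ P, ∀ b ∈ P, a + b ∈ F → a ∈ F ∧ b ∈ F)
    -- the ideal (𝔭) of k[P] generated by the monomials with exponent in 𝔭 = P ∖ F
    (I : Ideal (AddMonoidAlgebra k P))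
    (hI : I = Ideal.span {f : AddMonoidAlgebra k P |
      ∃ p : P, (p : G) ∉ F ∧ f = AddMonoidAlgebra.single p 1})
    -- the multiplicative set generated by the images of the monomials of F = P∖𝔭
    (S : Submonoid (AddMonoidAlgebra k P ⧸ I))
    (hS : S = Submonoid.closure
      ((fun p : P => Ideal.Quotient.mk I (AddMonoidAlgebra.single p 1)) ''
        {p : P | (p : G) ∈ F})) :
    Nonempty ((Localization S) ≃ₐ[k]
      AddMonoidAlgebra k (AddSubgroup.closure (F : Set G))) := by
  have hker : RingHom.ker (toFaceGroupAlgebra k F hface) = I := by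
    rw [ker_toFaceGroupAlgebra, hI]
    congr 1
    ext f
    simp [of'_apply, eq_comm]
  subst hker
  have hunit :
      S ≤ (IsUnit.submonoid _).comap (Ideal.kerLiftAlg (toFaceGroupAlgebra k F hface)) := by
    rw [hS, Submonoid.closure_le]
    rintro _ ⟨p, hp, rfl⟩
    exact isUnit_toFaceGroupAlgebra_single hface hp
  refine ⟨Localization.algEquivOfInjective (Ideal.kerLiftAlg _) (Ideal.kerLiftAlg_injective _)
    (fun s => hunit s.2) fun z => ?_⟩
  obtain ⟨x, s, hs, hx⟩ := exists_mul_toFaceGroupAlgebra_single_eq hface hFP z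
  have hsS : Ideal.Quotient.mk _ (single s 1) ∈ S := hS ▸ Submonoid.subset_closure ⟨s, hs, rfl⟩
  exact ⟨⟨Ideal.Quotient.mk _ x, ⟨_, hsS⟩⟩, by simpa only [Ideal.kerLiftAlg_mk] using hx⟩

/-- Let `k` be a field, `P` an fs monoid (a submonoid of its group envelope
`G`), and `𝔭` a prime ideal of `P`, i.e. the complement of a face `F = P∖𝔭`. Then the
localization of `k[P]/(𝔭)` at the multiplicative set generated by the (images of the) monomials
of `P∖𝔭` is isomorphic as a `k`-algebra to the group algebra `k[(P∖𝔭)^gp]`. -/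
theorem localization_of_quotient_is_group_algebra
    {k : Type*} [Field k]
    {G : Type*} [AddCommGroup G] (P F : AddSubmonoid G)
    (hgen : AddSubgroup.closure (P : Set G) = ⊤)
    (hfg : ∃ S : Finset G, AddSubmonoid.closure (S : Set G) = P)
    (hsat : ∀ g : G, ∀ n : ℕ, 0 < n → n • g ∈ P → g ∈ P)
    -- F = P∖𝔭 is a face of P
    (hFP : F ≤ P)
    (hface : ∀ a ∈ P, ∀ b ∈ P, a + b ∈ F → a ∈ F ∧ b ∈ F)
    -- the ideal (𝔭) of k[P] generated by the monomials with exponent in 𝔭 = P ∖ F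
    (I : Ideal (AddMonoidAlgebra k P))
    (hI : I = Ideal.span {f : AddMonoidAlgebra k P |
      ∃ p : P, (p : G) ∉ F ∧ f = AddMonoidAlgebra.single p 1})
    -- the multiplicative set generated by the images of the monomials of F = P∖𝔭
    (S : Submonoid (AddMonoidAlgebra k P ⧸ I))
    (hS : S = Submonoid.closure
      ((fun p : P => Ideal.Quotient.mk I (AddMonoidAlgebra.single p 1)) ''
        {p : P | (p : G) ∈ F})) :
    Nonempty ((Localization S) ≃ₐ[k]
      AddMonoidAlgebra k (AddSubgroup.closure (F : Set G))) :=
  localization_of_quotient_is_group_algebra_general P F hFP hface I hI S hS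
end

section
/- Let P be a sharp fs monoid, u : ℕ → P a homomorphism with a = u(1), and 𝔭 a height-one prime of P. Let r : P^gp → ℤ be the map induced by P^gp → P^gp/(P∖𝔭)^gp ≅ ℤ, with r(a) = m. Suppose p is a prime dividing m, and suppose the torsion subgroup of the cokernel C of u^gp : ℤ → P^gp has order prime to p. Choose b ∈ P with r(b) = 1 and set c = m·b − a ∈ (P∖𝔭)^gp. Then c is not divisible by p in the free abelian group (P∖𝔭)^gp. -/
/-- Let `P` be a sharp fs monoid with torsion-free group envelope `G = P^gp`,
`u : ℕ → P` a homomorphism with `a = u(1)`, and `𝔭` a height-one prime of `P`, inducing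
`r : P^gp → ℤ` with kernel `(P∖𝔭)^gp` and `r a = m > 0`. Suppose the prime `p` divides `m` and
the cokernel `C = G/⟨a⟩` of `u^gp` has no `p`-torsion. If `b ∈ P` satisfies `r b = 1` and
`c = m•b − a ∈ (P∖𝔭)^gp = ker r`, then `c` is not divisible by `p` in `ker r`. -/
theorem dlog_section_not_divisible
    {G : Type*} [AddCommGroup G] [NoZeroSMulDivisors ℤ G]  -- G = P^gp torsion free
    (r : G →+ ℤ) (hr : Function.Surjective r)
    (a b : G) (m : ℤ) (hm : m = r a) (hmpos : 0 < m)
    (hb : r b = 1)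
    (p : ℕ) (hp : p.Prime) (hpm : (p : ℤ) ∣ m)
    -- the cokernel C = G/⟨a⟩ of u^gp has no p-torsion
    (hC : ∀ y : G ⧸ AddSubgroup.zmultiples a, (p : ℤ) • y = 0 → y = 0) :
    ∀ x : G, r x = 0 → m • b - a ≠ (p : ℤ) • x := by
  intro x hx heq
  obtain ⟨k, hk⟩ := hpm
  have ha : a = (p : ℤ) • (k • b - x) := by
    have : a = m • b - (p : ℤ) • x := by rw [← heq]; abel
    rw [this, hk]; rw [smul_sub, mul_smul]
  -- image of k•b - x in C is p-torsion
  have hq : ((p : ℤ)) • (QuotientAddGroup.mk (s := AddSubgroup.zmultiples a) (k • b - x)) = 0 := by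
    rw [← QuotientAddGroup.mk_zsmul, ← ha]
    exact (QuotientAddGroup.eq_zero_iff a).mpr (AddSubgroup.mem_zmultiples a)
  have h0 := hC _ hq
  rw [QuotientAddGroup.eq_zero_iff] at h0
  obtain ⟨t, ht⟩ := h0
  simp only at ht
  have : a = ((p : ℤ) * t) • a := by rw [mul_smul, ht]; exact ha
  have h1 : (1 - (p : ℤ) * t) • a = 0 := by rw [sub_smul, one_smul, ← this, sub_self]
  have hane : a ≠ 0 := by
    intro h; rw [h, map_zero] at hm; omega
  rcases smul_eq_zero.mp h1 with h | h
  · have hp2 : (2 : ℤ) ≤ p := by exact_mod_cast hp.two_le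
    have : (p : ℤ) * t = 1 := by linarith [sub_eq_zero.mp h]
    have h3 := Int.eq_one_of_mul_eq_one_right (by linarith : (0:ℤ) ≤ p) this
    omega
  · exact hane h
end
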